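/- arXiv:1203.3036 — 6 statements merged into one kernel-verified Lean document; each statement's English description precedes it below -/
import Mathlib

section
/- If a family of Markov kernels {P_θ} satisfies P_θ W(x) ≤ λ̃ W(x) + b̃ θ(W) for all x, for a sequence of adapted kernels with E[f(X_{n+1}) | F_n] = P_{θ_n} f(X_n) and sup_k E[θ_k(W)] < ∞, then E[W(X_n)] ≤ λ̃^n E[W(X_0)] + (b̃/(1-λ̃)) sup_{k≥0} E[θ_k(W)] for all n. -/
open MeasureTheory ProbabilityTheory Measure
open scoped ProbabilityTheory

/-!
Integrating the conditional drift
`E[W(X_{m+1}) | F_m] = P_{θ_m} W(X_m) ≤ λ̃ W(X_m) + b̃ θ_m(W)` gives the scalar recursion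
`E W(X_{m+1}) ≤ λ̃ E W(X_m) + b̃ S` with `S = sup_k E θ_k(W)`, and unrolling it sums the
geometric series `b̃ S (1 + λ̃ + λ̃² + ⋯) ≤ b̃ S / (1 - λ̃)`.
-/

theorem le_pow_mul_add_div_of_le_mul_add {a : ℕ → ℝ} {lam c : ℝ} (hlam0 : 0 ≤ lam)
    (hlam1 : lam < 1) (hc : 0 ≤ c) (hstep : ∀ n, a (n + 1) ≤ lam * a n + c) (n : ℕ) :
    a n ≤ lam ^ n * a 0 + c / (1 - lam) := by
  have hpos : 0 < 1 - lam := sub_pos.mpr hlam1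
  induction n with
  | zero => simpa using div_nonneg hc hpos.le
  | succ n ih =>
    calc a (n + 1) ≤ lam * a n + c := hstep n
      _ ≤ lam * (lam ^ n * a 0 + c / (1 - lam)) + c := by gcongr
      _ = lam ^ (n + 1) * a 0 + c / (1 - lam) := by field_simp; ring

theorem integral_le_of_condExp_ae_eq_of_le {Ω : Type*} {m m₀ : MeasurableSpace Ω}
    {μ : Measure[m₀] Ω} (hm : m ≤ m₀) [SigmaFinite (μ.trim hm)] {f g h : Ω → ℝ}
    (hfg : μ[f | m] =ᵐ[μ] g) (hgh : ∀ᵐ ω ∂μ, g ω ≤ h ω) (hh : Integrable h μ) :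
    ∫ ω, f ω ∂μ ≤ ∫ ω, h ω ∂μ := by
  rw [← integral_condExp hm, integral_congr_ae hfg]
  exact integral_mono_ae (integrable_condExp.congr hfg) hh hgh

theorem adaptive_drift_moment_bound_general
    {X : Type*} [MeasurableSpace X]
    {Ω : Type*} {mΩ : MeasurableSpace Ω} (μ : Measure Ω) [IsProbabilityMeasure μ]
    (ℱ : Filtration ℕ mΩ)
    (P : Measure X → Kernel X X)
    (W : X → ℝ) (hW1 : ∀ x, 1 ≤ W x)
    (lam b : ℝ) (hlam : lam ∈ Set.Ioo (0:ℝ) 1) (hb : 0 ≤ b)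
    (hdrift : ∀ (θ : Measure X), IsProbabilityMeasure θ →
      ∀ x, ∫ y, W y ∂((P θ) x) ≤ lam * W x + b * ∫ y, W y ∂θ)
    (Xp : ℕ → Ω → X) (θp : ℕ → Ω → Measure X)
    (hθprob : ∀ n ω, IsProbabilityMeasure (θp n ω))
    (hint : ∀ n, Integrable (fun ω => W (Xp n ω)) μ)
    (hintθ : ∀ n, Integrable (fun ω => ∫ y, W y ∂(θp n ω)) μ)
    (hcond : ∀ n, μ[(fun ω => W (Xp (n+1) ω)) | ℱ n]
      =ᵐ[μ] fun ω => ∫ y, W y ∂((P (θp n ω)) (Xp n ω)))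
    (hbdd : BddAbove (Set.range fun k : ℕ => ∫ ω, (∫ y, W y ∂(θp k ω)) ∂μ))
    (n : ℕ) :
    ∫ ω, W (Xp n ω) ∂μ ≤
      lam ^ n * ∫ ω, W (Xp 0 ω) ∂μ +
        (b / (1 - lam)) * ⨆ k : ℕ, ∫ ω, (∫ y, W y ∂(θp k ω)) ∂μ := by
  set S : ℝ := ⨆ k : ℕ, ∫ ω, (∫ y, W y ∂(θp k ω)) ∂μ
  have hS : 0 ≤ S := (integral_nonneg fun ω => integral_nonneg fun y =>
    zero_le_one.trans (hW1 y)).trans (le_ciSup hbdd 0)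
  have hstep : ∀ m, ∫ ω, W (Xp (m + 1) ω) ∂μ ≤ lam * ∫ ω, W (Xp m ω) ∂μ + b * S := by
    intro m
    calc ∫ ω, W (Xp (m + 1) ω) ∂μ
        ≤ ∫ ω, (lam * W (Xp m ω) + b * ∫ y, W y ∂(θp m ω)) ∂μ :=
          integral_le_of_condExp_ae_eq_of_le (ℱ.le m) (hcond m)
            (ae_of_all _ fun ω => hdrift _ (hθprob m ω) _)
            (((hint m).const_mul lam).add ((hintθ m).const_mul b))
      _ = lam * ∫ ω, W (Xp m ω) ∂μ + b * ∫ ω, (∫ y, W y ∂(θp m ω)) ∂μ := by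
          rw [integral_add ((hint m).const_mul lam) ((hintθ m).const_mul b),
            integral_const_mul, integral_const_mul]
      _ ≤ lam * ∫ ω, W (Xp m ω) ∂μ + b * S := by grw [le_ciSup hbdd m]
  have hrec := le_pow_mul_add_div_of_le_mul_add (a := fun k => ∫ ω, W (Xp k ω) ∂μ)
    hlam.1.le hlam.2 (mul_nonneg hb hS) hstep n
  rwa [mul_div_right_comm] at hrec

/-- If a family of Markov kernels `{P_θ}` indexed by probability measures `θ` satisfies
`P_θ W(x) ≤ λ̃ W(x) + b̃ θ(W)`, and `{(X_n, θ_n)}` is an adapted process with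
`E[W(X_{n+1}) | F_n] = P_{θ_n} W(X_n)` and `sup_k E[θ_k(W)] < ∞`, then
`E[W(X_n)] ≤ λ̃^n E[W(X_0)] + (b̃/(1-λ̃)) sup_{k≥0} E[θ_k(W)]`. -/
theorem adaptive_drift_moment_bound
    {X : Type*} [MeasurableSpace X]
    {Ω : Type*} {mΩ : MeasurableSpace Ω} (μ : Measure Ω) [IsProbabilityMeasure μ]
    (ℱ : Filtration ℕ mΩ)
    (P : Measure X → Kernel X X) (hP : ∀ θ, IsMarkovKernel (P θ))
    (W : X → ℝ) (hWmeas : Measurable W) (hW1 : ∀ x, 1 ≤ W x)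
    (lam b : ℝ) (hlam : lam ∈ Set.Ioo (0:ℝ) 1) (hb : 0 ≤ b)
    (hdrift : ∀ (θ : Measure X), IsProbabilityMeasure θ →
      ∀ x, ∫ y, W y ∂((P θ) x) ≤ lam * W x + b * ∫ y, W y ∂θ)
    (Xp : ℕ → Ω → X) (θp : ℕ → Ω → Measure X)
    (hθprob : ∀ n ω, IsProbabilityMeasure (θp n ω))
    (hXadapted : ∀ n, Measurable[ℱ n] (Xp n))
    (hint : ∀ n, Integrable (fun ω => W (Xp n ω)) μ)
    (hintθ : ∀ n, Integrable (fun ω => ∫ y, W y ∂(θp n ω)) μ)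
    (hcond : ∀ n, μ[(fun ω => W (Xp (n+1) ω)) | ℱ n]
      =ᵐ[μ] fun ω => ∫ y, W y ∂((P (θp n ω)) (Xp n ω)))
    (hbdd : BddAbove (Set.range fun k : ℕ => ∫ ω, (∫ y, W y ∂(θp k ω)) ∂μ))
    (hX0 : Integrable (fun ω => W (Xp 0 ω)) μ) (n : ℕ) :
    ∫ ω, W (Xp n ω) ∂μ ≤
      lam ^ n * ∫ ω, W (Xp 0 ω) ∂μ +
        (b / (1 - lam)) * ⨆ k : ℕ, ∫ ω, (∫ y, W y ∂(θp k ω)) ∂μ :=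
  adaptive_drift_moment_bound_general μ ℱ P W hW1 lam b hlam hb hdrift Xp θp hθprob hint hintθ hcond
    hbdd n
end

section
/- Let {P_θ} be Markov kernels with invariant probabilities π_θ, satisfying ‖P_θ^n(x,·) − π_θ‖_V ≤ C_θ ρ_θ^n V(x). Then for any θ, θ' and any x ∈ X, ‖π_θ − π_{θ'}‖_V ≤ L_{θ'}^2 { π_θ(V) + L_θ^2 V(x) } D_V(θ, θ'), where L_θ := C_θ ∨ (1−ρ_θ)^{−1} and D_V(θ,θ') := sup_x ‖P_θ(x,·) − P_{θ'}(x,·)‖_V / V(x). -/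
/-!
Telescope `P^n - P'^n = ∑_{k<n} P^k (P - P') P'^(n-1-k)`. Since `P - P'` annihilates constants,
the `k`-th term only sees `P'^(n-1-k) f - π'(f)`, whose `V`-norm is at most `C' ρ'^(n-1-k)`, and
the drift bound `P^k V(x) ≤ π(V) + C ρ^k V(x)` controls what is left. Summing the two geometric
series bounds `|P^n f(x) - P'^n f(x)|` uniformly in `n`; letting `n → ∞` turns it into the bound on
`|π(f) - π'(f)|`. The integrability of `V` under `π` and under every `P^n(x,·)` comes from the
ergodicity bound itself, applied to the truncations `V ∧ M`.
-/

open MeasureTheory ProbabilityTheory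
open scoped ProbabilityTheory

/-- The `n`-fold iterate `P^n` of a Markov kernel. -/
noncomputable def iterKernel {X : Type*} [MeasurableSpace X] (P : Kernel X X) : ℕ → Kernel X X
  | 0 => Kernel.id
  | n + 1 => P ∘ₖ iterKernel P n

open Filter Topology

section

variable {X : Type*} [MeasurableSpace X]

section iterKernel

variable (P : Kernel X X)

theorem iterKernel_zero_apply (x : X) : iterKernel P 0 x = Measure.dirac x := Kernel.id_apply x

instance isMarkovKernel_iterKernel [IsMarkovKernel P] (n : ℕ) :
    IsMarkovKernel (iterKernel P n) := by
  induction n with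
  | zero => exact inferInstanceAs (IsMarkovKernel Kernel.id)
  | succ n _ => exact inferInstanceAs (IsMarkovKernel (P ∘ₖ iterKernel P n))

theorem iterKernel_one_apply [IsSFiniteKernel P] (x : X) : iterKernel P 1 x = P x := by
  change (P ∘ₖ Kernel.id) x = P x
  rw [Kernel.comp_id]

theorem iterKernel_succ' [IsSFiniteKernel P] (n : ℕ) :
    iterKernel P (n + 1) = iterKernel P n ∘ₖ P := by
  induction n with
  | zero => exact (Kernel.comp_id P).trans (Kernel.id_comp P).symm
  | succ n ih =>
    change P ∘ₖ iterKernel P (n + 1) = (P ∘ₖ iterKernel P n) ∘ₖ P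
    rw [ih, Kernel.comp_assoc]

theorem integral_iterKernel_succ_apply' [IsSFiniteKernel P] {f : X → ℝ} (m : ℕ) (y : X)
    (hf : Integrable f (iterKernel P (m + 1) y)) :
    ∫ z, f z ∂(iterKernel P (m + 1) y) = ∫ w, ∫ z, f z ∂(iterKernel P m w) ∂(P y) := by
  rw [iterKernel_succ'] at hf ⊢
  exact Kernel.integral_comp hf

end iterKernel

theorem integrable_of_abs_sub_le {μ : Measure X} [IsFiniteMeasure μ] {g V : X → ℝ} {a c : ℝ}
    (hg : AEStronglyMeasurable g μ) (hV : Integrable V μ) (h : ∀ y, |g y - a| ≤ c * V y) :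
    Integrable g μ := by
  have hsub : Integrable (fun y => g y - a) μ :=
    (hV.const_mul c).mono' (hg.sub aestronglyMeasurable_const) (ae_of_all _ h)
  exact (hsub.add (integrable_const a)).congr (ae_of_all _ fun y => sub_add_cancel (g y) a)

theorem integrable_and_integral_le_of_forall_abs_integral_sub_le {μ ν : Measure X}
    [IsFiniteMeasure μ] [IsFiniteMeasure ν] {V : X → ℝ} (hV : Measurable V)
    (hV0 : ∀ y, 0 ≤ V y) (hνV : Integrable V ν) {c : ℝ}
    (h : ∀ f : X → ℝ, Measurable f → (∀ y, |f y| ≤ V y) → |∫ y, f y ∂μ - ∫ y, f y ∂ν| ≤ c) :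
    Integrable V μ ∧ ∫ y, V y ∂μ ≤ ∫ y, V y ∂ν + c := by
  set t : ℕ → X → ℝ := fun M y => min (V y) M
  have ht_meas (M : ℕ) : Measurable (t M) := hV.min measurable_const
  have ht_nonneg (M : ℕ) (y : X) : 0 ≤ t M y := le_min (hV0 y) M.cast_nonneg
  have ht_int (M : ℕ) (η : Measure X) [IsFiniteMeasure η] : Integrable (t M) η :=
    (integrable_const (M : ℝ)).mono' (ht_meas M).aestronglyMeasurable
      (ae_of_all _ fun y => (abs_of_nonneg (ht_nonneg M y)).trans_le (min_le_right _ _))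
  have ht_le (M : ℕ) : ∫ y, t M y ∂μ ≤ ∫ y, V y ∂ν + c := by
    have hM := (abs_le.mp (h (t M) (ht_meas M)
      fun y => (abs_of_nonneg (ht_nonneg M y)).trans_le (min_le_left _ _))).2
    have := integral_mono (ht_int M ν) hνV fun y => min_le_left (V y) M
    linarith
  have hc : 0 ≤ c := by simpa using h 0 measurable_const (by simpa using hV0)
  have h_tendsto : Tendsto (fun M => ∫⁻ y, ENNReal.ofReal (t M y) ∂μ) atTop
      (𝓝 (∫⁻ y, ENNReal.ofReal (V y) ∂μ)) := by
    refine lintegral_tendsto_of_tendsto_of_monotone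
      (fun M => (ht_meas M).ennreal_ofReal.aemeasurable)
      (ae_of_all _ fun y M N hMN =>
        ENNReal.ofReal_le_ofReal (min_le_min_left _ (by exact_mod_cast hMN)))
      (ae_of_all _ fun y => ?_)
    refine (ENNReal.continuous_ofReal.tendsto _).comp (tendsto_const_nhds.congr' ?_)
    filter_upwards [eventually_ge_atTop ⌈V y⌉₊] with M hM
    exact (min_eq_left (Nat.ceil_le.mp hM)).symm
  have h_lintegral : ∫⁻ y, ENNReal.ofReal (V y) ∂μ ≤ ENNReal.ofReal (∫ y, V y ∂ν + c) := by
    refine le_of_tendsto' h_tendsto fun M => ?_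
    rw [← ofReal_integral_eq_lintegral_ofReal (ht_int M μ) (ae_of_all _ (ht_nonneg M))]
    exact ENNReal.ofReal_le_ofReal (ht_le M)
  refine ⟨⟨hV.aestronglyMeasurable, (hasFiniteIntegral_iff_ofReal (ae_of_all _ hV0)).mpr
    (h_lintegral.trans_lt ENNReal.ofReal_lt_top)⟩, ?_⟩
  rw [integral_eq_lintegral_of_nonneg_ae (ae_of_all _ hV0) hV.aestronglyMeasurable]
  exact ENNReal.toReal_le_of_le_ofReal (add_nonneg (integral_nonneg hV0) hc) h_lintegral

/-- `‖P^n(x,·) - π‖_V ≤ C ρ^n V(x)`, the `V`-norm being tested on measurable `f` with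
`|f| ≤ V`. -/
def IsVGeometricallyErgodic (P : Kernel X X) (V : X → ℝ) (π : Measure X) (C ρ : ℝ) : Prop :=
  ∀ f : X → ℝ, Measurable f → (∀ y, |f y| ≤ V y) →
    ∀ (n : ℕ) (x : X), |∫ y, f y ∂(iterKernel P n x) - ∫ y, f y ∂π| ≤ C * ρ ^ n * V x

/-- `D_V(P, P') ≤ Δ`, i.e. `‖P(y,·) - P'(y,·)‖_V ≤ Δ V(y)` for every `y`. -/
def VDistLE (P P' : Kernel X X) (V : X → ℝ) (Δ : ℝ) : Prop :=
  ∀ g : X → ℝ, Measurable g → (∀ y, |g y| ≤ V y) →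
    ∀ y, |∫ z, g z ∂(P y) - ∫ z, g z ∂(P' y)| ≤ Δ * V y

namespace IsVGeometricallyErgodic

variable {P : Kernel X X} {V : X → ℝ} {π : Measure X} [IsProbabilityMeasure π] {C ρ : ℝ}

theorem integrable_limit (h : IsVGeometricallyErgodic P V π C ρ) (hV : Measurable V)
    (hV0 : ∀ y, 0 ≤ V y) (x : X) : Integrable V π := by
  refine (integrable_and_integral_le_of_forall_abs_integral_sub_le (ν := Measure.dirac x)
    (c := C * V x) hV hV0 (integrable_dirac' hV.stronglyMeasurable (by simp))
    fun f hf hfV => ?_).1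
  rw [integral_dirac' f x hf.stronglyMeasurable]
  have h0 := h f hf hfV 0 x
  rwa [iterKernel_zero_apply, integral_dirac' f x hf.stronglyMeasurable, pow_zero, mul_one,
    abs_sub_comm] at h0

variable [IsMarkovKernel P]

theorem integrable_iterKernel (h : IsVGeometricallyErgodic P V π C ρ) (hV : Measurable V)
    (hV0 : ∀ y, 0 ≤ V y) (n : ℕ) (x : X) : Integrable V (iterKernel P n x) :=
  (integrable_and_integral_le_of_forall_abs_integral_sub_le hV hV0 (h.integrable_limit hV hV0 x)
    fun f hf hfV => h f hf hfV n x).1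

theorem integral_iterKernel_le (h : IsVGeometricallyErgodic P V π C ρ) (hV : Measurable V)
    (hV0 : ∀ y, 0 ≤ V y) (n : ℕ) (x : X) :
    ∫ y, V y ∂(iterKernel P n x) ≤ ∫ y, V y ∂π + C * ρ ^ n * V x :=
  (integrable_and_integral_le_of_forall_abs_integral_sub_le hV hV0 (h.integrable_limit hV hV0 x)
    fun f hf hfV => h f hf hfV n x).2

end IsVGeometricallyErgodic

theorem abs_integral_sub_le_of_forall_abs_integral_iterKernel_sub_le {P P' : Kernel X X}
    {V : X → ℝ} {π π' : Measure X} {C ρ C' ρ' : ℝ} {f : X → ℝ}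
    (herg : IsVGeometricallyErgodic P V π C ρ) (herg' : IsVGeometricallyErgodic P' V π' C' ρ')
    (hρ0 : 0 ≤ ρ) (hρ1 : ρ < 1) (hρ'0 : 0 ≤ ρ') (hρ'1 : ρ' < 1)
    (hf : Measurable f) (hfV : ∀ y, |f y| ≤ V y) (x : X) {S : ℝ}
    (hS : ∀ n, |∫ y, f y ∂(iterKernel P n x) - ∫ y, f y ∂(iterKernel P' n x)| ≤ S) :
    |∫ y, f y ∂π - ∫ y, f y ∂π'| ≤ S := by
  have hbound (n : ℕ) :
      |∫ y, f y ∂π - ∫ y, f y ∂π'| ≤ S + (C * ρ ^ n * V x + C' * ρ' ^ n * V x) := by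
    have h := herg f hf hfV n x
    have h' := herg' f hf hfV n x
    have := abs_sub_le (∫ y, f y ∂π) (∫ y, f y ∂(iterKernel P n x)) (∫ y, f y ∂π')
    have := abs_sub_le (∫ y, f y ∂(iterKernel P n x)) (∫ y, f y ∂(iterKernel P' n x))
      (∫ y, f y ∂π')
    rw [abs_sub_comm] at h
    linarith [hS n]
  have hlim : Tendsto (fun n => S + (C * ρ ^ n * V x + C' * ρ' ^ n * V x)) atTop (𝓝 S) := by
    have hρn := tendsto_pow_atTop_nhds_zero_of_lt_one hρ0 hρ1
    have hρ'n := tendsto_pow_atTop_nhds_zero_of_lt_one hρ'0 hρ'1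
    simpa using tendsto_const_nhds.add (((hρn.const_mul C).mul_const (V x)).add
      ((hρ'n.const_mul C').mul_const (V x)))
  exact ge_of_tendsto' hlim hbound

theorem abs_integral_sub_integral_le_of_abs_sub_le {μ ν : Measure X} [IsProbabilityMeasure μ]
    [IsProbabilityMeasure ν] {V : X → ℝ} {Δ : ℝ}
    (hΔ : ∀ g : X → ℝ, Measurable g → (∀ y, |g y| ≤ V y) → |∫ y, g y ∂μ - ∫ y, g y ∂ν| ≤ Δ)
    {g : X → ℝ} (hg : Measurable g) (hgμ : Integrable g μ) (hgν : Integrable g ν) {a c : ℝ}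
    (hc : 0 < c) (hga : ∀ y, |g y - a| ≤ c * V y) :
    |∫ y, g y ∂μ - ∫ y, g y ∂ν| ≤ c * Δ := by
  have hscaled := hΔ (fun y => c⁻¹ * (g y - a)) ((hg.sub measurable_const).const_mul _)
    fun y => by rw [abs_mul, abs_inv, abs_of_pos hc, inv_mul_le_iff₀ hc]; exact hga y
  have hint (η : Measure X) [IsProbabilityMeasure η] (hgη : Integrable g η) :
      ∫ y, c⁻¹ * (g y - a) ∂η = c⁻¹ * (∫ y, g y ∂η - a) := by
    rw [integral_const_mul, integral_sub hgη (integrable_const a), integral_const, probReal_univ,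
      one_smul]
  rwa [hint μ hgμ, hint ν hgν, ← mul_sub, sub_sub_sub_cancel_right, abs_mul, abs_inv,
    abs_of_pos hc, inv_mul_le_iff₀ hc] at hscaled

theorem geom_sum_le_inv_one_sub {r : ℝ} (hr0 : 0 ≤ r) (hr1 : r < 1) (n : ℕ) :
    ∑ i ∈ Finset.range n, r ^ i ≤ (1 - r)⁻¹ := by
  have h := geom_sum_Ico_le_of_lt_one (m := 0) (n := n) hr0 hr1
  rwa [← Finset.range_eq_Ico, pow_zero, one_div] at h

theorem sum_range_pow_mul_add_le {ρ ρ' A B : ℝ} (hρ0 : 0 ≤ ρ) (hρ1 : ρ < 1) (hρ'0 : 0 ≤ ρ')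
    (hρ'1 : ρ' < 1) (hA : 0 ≤ A) (hB : 0 ≤ B) (n : ℕ) :
    ∑ k ∈ Finset.range n, ρ' ^ (n - 1 - k) * (A + B * ρ ^ k)
      ≤ A * (1 - ρ')⁻¹ + B * (1 - ρ)⁻¹ := by
  have hterm (k : ℕ) :
      ρ' ^ (n - 1 - k) * (A + B * ρ ^ k) ≤ A * ρ' ^ (n - 1 - k) + B * ρ ^ k := by
    have := mul_le_of_le_one_left (mul_nonneg hB (pow_nonneg hρ0 k))
      (pow_le_one₀ (n := n - 1 - k) hρ'0 hρ'1.le)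
    linarith [mul_comm A (ρ' ^ (n - 1 - k))]
  calc ∑ k ∈ Finset.range n, ρ' ^ (n - 1 - k) * (A + B * ρ ^ k)
      ≤ ∑ k ∈ Finset.range n, (A * ρ' ^ (n - 1 - k) + B * ρ ^ k) :=
        Finset.sum_le_sum fun k _ => hterm k
    _ = A * ∑ k ∈ Finset.range n, ρ' ^ k + B * ∑ k ∈ Finset.range n, ρ ^ k := by
      rw [Finset.sum_add_distrib, ← Finset.mul_sum, ← Finset.mul_sum,
        Finset.sum_range_reflect (fun k => ρ' ^ k) n]
    _ ≤ A * (1 - ρ')⁻¹ + B * (1 - ρ)⁻¹ := by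
      gcongr
      exacts [geom_sum_le_inv_one_sub hρ'0 hρ'1 n, geom_sum_le_inv_one_sub hρ0 hρ1 n]

theorem sub_eq_sum_range_sub_antidiagonal {M : Type*} [AddCommGroup M] (F : ℕ → ℕ → M)
    (n : ℕ) : F n 0 - F 0 n = ∑ k ∈ Finset.range n, (F (k + 1) (n - 1 - k) - F k (n - k)) := by
  have htel := Finset.sum_range_sub (fun k => F k (n - k)) n
  simp only [Nat.sub_self, Nat.sub_zero] at htel
  rw [← htel]
  refine Finset.sum_congr rfl fun k _ => ?_
  rw [Nat.sub_sub, Nat.add_comm 1 k]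

section Perturbation

variable {P P' : Kernel X X} [IsMarkovKernel P] [IsMarkovKernel P'] {V : X → ℝ}
  {π π' : Measure X} [IsProbabilityMeasure π] [IsProbabilityMeasure π'] {C ρ C' ρ' Δ : ℝ}
  {f : X → ℝ}

theorem abs_integral_iterKernel_perturbation_le (hV : Measurable V) (hV0 : ∀ y, 0 ≤ V y)
    (herg : IsVGeometricallyErgodic P V π C ρ) (herg' : IsVGeometricallyErgodic P' V π' C' ρ')
    (hC' : 0 < C') (hρ' : 0 < ρ') (hΔ0 : 0 ≤ Δ) (hΔ : VDistLE P P' V Δ)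
    (hf : Measurable f) (hfV : ∀ y, |f y| ≤ V y) (k m : ℕ) (x : X) :
    |∫ y, ∫ z, f z ∂(iterKernel P' m y) ∂(iterKernel P (k + 1) x)
        - ∫ y, ∫ z, f z ∂(iterKernel P' (m + 1) y) ∂(iterKernel P k x)|
      ≤ C' * ρ' ^ m * Δ * (∫ y, V y ∂π + C * ρ ^ k * V x) := by
  set g : ℕ → X → ℝ := fun m y => ∫ z, f z ∂(iterKernel P' m y)
  have hg_meas (m : ℕ) : Measurable (g m) := hf.stronglyMeasurable.integral_kernel.measurable
  have hg_osc (m : ℕ) (y : X) : |g m y - ∫ z, f z ∂π'| ≤ C' * ρ' ^ m * V y :=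
    herg' f hf hfV m y
  have hg_int (m : ℕ) (μ : Measure X) [IsProbabilityMeasure μ] (hμ : Integrable V μ) :
      Integrable (g m) μ :=
    integrable_of_abs_sub_le (hg_meas m).aestronglyMeasurable hμ (hg_osc m)
  have hV_iter := herg.integrable_iterKernel hV hV0
  have hV_iter' := herg'.integrable_iterKernel hV hV0
  have hg_succ (y : X) : g (m + 1) y = ∫ w, g m w ∂(P' y) :=
    integral_iterKernel_succ_apply' P' m y
      ((hV_iter' (m + 1) y).mono' hf.aestronglyMeasurable (ae_of_all _ hfV))
  have hPg_int : Integrable (fun y => ∫ w, g m w ∂(P y)) (iterKernel P k x) :=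
    (hg_int m _ (hV_iter (k + 1) x)).integral_comp
  have hP'g_int : Integrable (fun y => ∫ w, g m w ∂(P' y)) (iterKernel P k x) :=
    (hg_int (m + 1) _ (hV_iter k x)).congr (ae_of_all _ hg_succ)
  have hstep (y : X) :
      |∫ w, g m w ∂(P y) - ∫ w, g m w ∂(P' y)| ≤ C' * ρ' ^ m * Δ * V y := by
    rw [mul_assoc]
    exact abs_integral_sub_integral_le_of_abs_sub_le (fun g hg hgV => hΔ g hg hgV y) (hg_meas m)
      (hg_int m _ (iterKernel_one_apply P y ▸ hV_iter 1 y))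
      (hg_int m _ (iterKernel_one_apply P' y ▸ hV_iter' 1 y)) (by positivity) (hg_osc m)
  calc |∫ y, g m y ∂(iterKernel P (k + 1) x) - ∫ y, g (m + 1) y ∂(iterKernel P k x)|
      = |∫ y, (∫ w, g m w ∂(P y) - ∫ w, g m w ∂(P' y)) ∂(iterKernel P k x)| := by
        rw [integral_sub hPg_int hP'g_int, integral_congr_ae (ae_of_all _ hg_succ)]
        congr 2
        exact Kernel.integral_comp (hg_int m _ (hV_iter (k + 1) x))
    _ ≤ ∫ y, |∫ w, g m w ∂(P y) - ∫ w, g m w ∂(P' y)| ∂(iterKernel P k x) :=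
        abs_integral_le_integral_abs
    _ ≤ ∫ y, C' * ρ' ^ m * Δ * V y ∂(iterKernel P k x) :=
        integral_mono (hPg_int.sub hP'g_int).abs ((hV_iter k x).const_mul _) hstep
    _ = C' * ρ' ^ m * Δ * ∫ y, V y ∂(iterKernel P k x) := integral_const_mul _ _
    _ ≤ C' * ρ' ^ m * Δ * (∫ y, V y ∂π + C * ρ ^ k * V x) := by
        gcongr
        exact herg.integral_iterKernel_le hV hV0 k x

theorem abs_integral_iterKernel_sub_le (hV : Measurable V) (hV0 : ∀ y, 0 ≤ V y)
    (herg : IsVGeometricallyErgodic P V π C ρ) (herg' : IsVGeometricallyErgodic P' V π' C' ρ')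
    (hC : 0 ≤ C) (hρ0 : 0 ≤ ρ) (hρ1 : ρ < 1) (hC' : 0 < C') (hρ'0 : 0 < ρ') (hρ'1 : ρ' < 1)
    (hΔ0 : 0 ≤ Δ) (hΔ : VDistLE P P' V Δ) (hf : Measurable f) (hfV : ∀ y, |f y| ≤ V y)
    (n : ℕ) (x : X) :
    |∫ y, f y ∂(iterKernel P n x) - ∫ y, f y ∂(iterKernel P' n x)|
      ≤ C' * Δ * ((∫ y, V y ∂π) * (1 - ρ')⁻¹ + C * V x * (1 - ρ)⁻¹) := by
  set F : ℕ → ℕ → ℝ := fun k m => ∫ y, ∫ z, f z ∂(iterKernel P' m y) ∂(iterKernel P k x)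
  have hF_left : F n 0 = ∫ y, f y ∂(iterKernel P n x) := by
    simp only [F, iterKernel_zero_apply, integral_dirac' f _ hf.stronglyMeasurable]
  have hF_right : F 0 n = ∫ y, f y ∂(iterKernel P' n x) := by
    simp only [F, iterKernel_zero_apply]
    exact integral_dirac' _ x hf.stronglyMeasurable.integral_kernel
  rw [← hF_left, ← hF_right, sub_eq_sum_range_sub_antidiagonal]
  calc |∑ k ∈ Finset.range n, (F (k + 1) (n - 1 - k) - F k (n - k))|
      ≤ ∑ k ∈ Finset.range n, |F (k + 1) (n - 1 - k) - F k (n - k)| :=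
        Finset.abs_sum_le_sum_abs _ _
    _ ≤ ∑ k ∈ Finset.range n,
          C' * ρ' ^ (n - 1 - k) * Δ * (∫ y, V y ∂π + C * ρ ^ k * V x) := by
        refine Finset.sum_le_sum fun k hk => ?_
        rw [show n - k = n - 1 - k + 1 by have := Finset.mem_range.mp hk; omega]
        exact abs_integral_iterKernel_perturbation_le hV hV0 herg herg' hC' hρ'0 hΔ0 hΔ hf hfV
          k (n - 1 - k) x
    _ = C' * Δ * ∑ k ∈ Finset.range n,
          ρ' ^ (n - 1 - k) * (∫ y, V y ∂π + C * V x * ρ ^ k) := by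
        rw [Finset.mul_sum]
        exact Finset.sum_congr rfl fun k _ => by ring
    _ ≤ C' * Δ * ((∫ y, V y ∂π) * (1 - ρ')⁻¹ + C * V x * (1 - ρ)⁻¹) := by
        gcongr
        exact sum_range_pow_mul_add_le hρ0 hρ1 hρ'0.le hρ'1 (integral_nonneg hV0)
          (mul_nonneg hC (hV0 x)) n

end Perturbation

theorem mul_le_max_sq {α : Type*} [Semiring α] [LinearOrder α] [IsOrderedRing α] {a b : α}
    (ha : 0 ≤ a) (hb : 0 ≤ b) : a * b ≤ max a b ^ 2 :=
  sq (max a b) ▸ mul_le_mul (le_max_left a b) (le_max_right a b) hb (ha.trans (le_max_left a b))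

theorem mul_add_mul_inv_one_sub_le_max_sq {C ρ C' ρ' A B Δ : ℝ} (hC : 0 ≤ C) (hρ : ρ < 1)
    (hC' : 0 ≤ C') (hρ'0 : 0 ≤ ρ') (hρ'1 : ρ' < 1) (hA : 0 ≤ A) (hB : 0 ≤ B) (hΔ : 0 ≤ Δ) :
    C' * Δ * (A * (1 - ρ')⁻¹ + C * B * (1 - ρ)⁻¹)
      ≤ (max C' (1 - ρ')⁻¹) ^ 2 * (A + (max C (1 - ρ)⁻¹) ^ 2 * B) * Δ := by
  set L := max C (1 - ρ)⁻¹
  set L' := max C' (1 - ρ')⁻¹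
  have hL' : 1 ≤ L' := le_max_of_le_right ((one_le_inv₀ (by linarith)).mpr (by linarith))
  have hCρ : C * (1 - ρ)⁻¹ ≤ L ^ 2 := mul_le_max_sq hC (inv_nonneg.mpr (by linarith))
  have hC'ρ' : C' * (1 - ρ')⁻¹ ≤ L' ^ 2 := mul_le_max_sq hC' (inv_nonneg.mpr (by linarith))
  have hC'L' : C' ≤ L' ^ 2 := (le_max_left _ _).trans (le_self_pow₀ hL' two_ne_zero)
  calc C' * Δ * (A * (1 - ρ')⁻¹ + C * B * (1 - ρ)⁻¹)
      = (C' * (1 - ρ')⁻¹) * A * Δ + C' * (C * (1 - ρ)⁻¹) * B * Δ := by ring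
    _ ≤ L' ^ 2 * A * Δ + L' ^ 2 * L ^ 2 * B * Δ := by gcongr
    _ = L' ^ 2 * (A + L ^ 2 * B) * Δ := by ring

end

theorem invariant_measure_V_regularity_general {X : Type*} [MeasurableSpace X]
    (P P' : Kernel X X) [IsMarkovKernel P] [IsMarkovKernel P']
    (V : X → ℝ) (hVmeas : Measurable V) (hV1 : ∀ x, 1 ≤ V x)
    (π π' : Measure X) [IsProbabilityMeasure π] [IsProbabilityMeasure π']
    (C ρ C' ρ' : ℝ) (hC : 1 ≤ C) (hρ : ρ ∈ Set.Ioo (0:ℝ) 1)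
    (hC' : 1 ≤ C') (hρ' : ρ' ∈ Set.Ioo (0:ℝ) 1)
    (herg : ∀ (f : X → ℝ), Measurable f → (∀ y, |f y| ≤ V y) →
      ∀ (n : ℕ) (x : X),
        |∫ y, f y ∂(iterKernel P n x) - ∫ y, f y ∂π| ≤ C * ρ ^ n * V x)
    (herg' : ∀ (f : X → ℝ), Measurable f → (∀ y, |f y| ≤ V y) →
      ∀ (n : ℕ) (x : X),
        |∫ y, f y ∂(iterKernel P' n x) - ∫ y, f y ∂π'| ≤ C' * ρ' ^ n * V x)
    (Δ : ℝ)
    (hΔ : ∀ (g : X → ℝ), Measurable g → (∀ y, |g y| ≤ V y) →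
      ∀ y, |∫ z, g z ∂(P y) - ∫ z, g z ∂(P' y)| ≤ Δ * V y)
    (x : X) (f : X → ℝ) (hf : Measurable f) (hfV : ∀ y, |f y| ≤ V y) :
    |∫ y, f y ∂π - ∫ y, f y ∂π'|
      ≤ (max C' (1 - ρ')⁻¹) ^ 2 *
          ((∫ y, V y ∂π) + (max C (1 - ρ)⁻¹) ^ 2 * V x) * Δ := by
  obtain ⟨hρ0, hρ1⟩ := hρ
  obtain ⟨hρ'0, hρ'1⟩ := hρ'
  have hV0 (y : X) : 0 ≤ V y := zero_le_one.trans (hV1 y)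
  have hΔ0 : 0 ≤ Δ := by
    have h := hΔ 0 measurable_const (by simpa using hV0) x
    simp only [Pi.zero_apply, integral_zero, sub_zero, abs_zero] at h
    exact nonneg_of_mul_nonneg_left h (zero_lt_one.trans_le (hV1 x))
  have hiter (n : ℕ) := abs_integral_iterKernel_sub_le hVmeas hV0 herg herg' (by linarith)
    hρ0.le hρ1 (by linarith) hρ'0 hρ'1 hΔ0 hΔ hf hfV n x
  exact (abs_integral_sub_le_of_forall_abs_integral_iterKernel_sub_le herg herg' hρ0.le hρ1
    hρ'0.le hρ'1 hf hfV x hiter).trans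
      (mul_add_mul_inv_one_sub_le_max_sq (by linarith) hρ1 (by linarith) hρ'0.le hρ'1
        (integral_nonneg hV0) (hV0 x) hΔ0)

/-- Regularity in `θ` of the invariant distribution: if `P_θ` and `P_{θ'}` are
`V`-geometrically ergodic with constants `(C_θ, ρ_θ)`, `(C_{θ'}, ρ_{θ'})` and invariant
probabilities `π_θ`, `π_{θ'}`, then for any `x`,
`‖π_θ - π_{θ'}‖_V ≤ L_{θ'}² {π_θ(V) + L_θ² V(x)} D_V(θ, θ')`,
where `L_θ = C_θ ∨ (1-ρ_θ)⁻¹` and `Δ` is any bound on the `V`-variation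
`D_V(θ,θ') = sup_x ‖P_θ(x,·) - P_{θ'}(x,·)‖_V / V(x)`. -/
theorem invariant_measure_V_regularity {X : Type*} [MeasurableSpace X]
    (P P' : Kernel X X) [IsMarkovKernel P] [IsMarkovKernel P']
    (V : X → ℝ) (hVmeas : Measurable V) (hV1 : ∀ x, 1 ≤ V x)
    (π π' : Measure X) [IsProbabilityMeasure π] [IsProbabilityMeasure π']
    (hVint : Integrable V π) (hVint' : Integrable V π')
    (hinv : π.bind P = π) (hinv' : π'.bind P' = π')
    (C ρ C' ρ' : ℝ) (hC : 1 ≤ C) (hρ : ρ ∈ Set.Ioo (0:ℝ) 1)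
    (hC' : 1 ≤ C') (hρ' : ρ' ∈ Set.Ioo (0:ℝ) 1)
    (herg : ∀ (f : X → ℝ), Measurable f → (∀ y, |f y| ≤ V y) →
      ∀ (n : ℕ) (x : X),
        |∫ y, f y ∂(iterKernel P n x) - ∫ y, f y ∂π| ≤ C * ρ ^ n * V x)
    (herg' : ∀ (f : X → ℝ), Measurable f → (∀ y, |f y| ≤ V y) →
      ∀ (n : ℕ) (x : X),
        |∫ y, f y ∂(iterKernel P' n x) - ∫ y, f y ∂π'| ≤ C' * ρ' ^ n * V x)
    (Δ : ℝ)
    (hΔ : ∀ (g : X → ℝ), Measurable g → (∀ y, |g y| ≤ V y) →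
      ∀ y, |∫ z, g z ∂(P y) - ∫ z, g z ∂(P' y)| ≤ Δ * V y)
    (x : X) (f : X → ℝ) (hf : Measurable f) (hfV : ∀ y, |f y| ≤ V y) :
    |∫ y, f y ∂π - ∫ y, f y ∂π'|
      ≤ (max C' (1 - ρ')⁻¹) ^ 2 *
          ((∫ y, V y ∂π) + (max C (1 - ρ)⁻¹) ^ 2 * V x) * Δ :=
  invariant_measure_V_regularity_general P P' V hVmeas hV1 π π' C ρ C' ρ' hC hρ hC' hρ' herg herg' Δ
    hΔ x f hf hfV
end

section
/- For the interacting tempering acceptance ratio α(x,y) = 1 ∧ (π^β(y)/π^β(x)) with β ∈ (0,1), for any x, x', y with π(x), π(x'), π(y) > 0 and π(x) ≤ π(x'), one has |α(x,y) − α(x',y)| ≤ (π^{−β}(x) − π^{−β}(x')) π^β(y) · 1{π(y) ≤ π(x')}. -/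
/-!
With `a = π(x)^β ≤ b = π(x')^β` and `c = π(y)^β`, the map `t ↦ min 1 t` is 1-Lipschitz, so the
difference of acceptance ratios is at most `c/a - c/b = (a⁻¹ - b⁻¹) c`. When `c > b` (equivalently
`π(y) > π(x')`, as `t ↦ t^β` is strictly increasing for `β > 0`) both ratios exceed `1` and are
truncated to `1`, so the difference vanishes.
-/

lemma abs_min_one_div_sub_min_one_div_le {a b c : ℝ} (ha : 0 < a) (hab : a ≤ b) (hc : 0 ≤ c) :
    |min 1 (c / a) - min 1 (c / b)| ≤ (a⁻¹ - b⁻¹) * c := by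
  have hdiv : c / b ≤ c / a := div_le_div_of_nonneg_left hc ha hab
  calc |min 1 (c / a) - min 1 (c / b)|
      ≤ max |1 - 1| |c / a - c / b| := abs_min_sub_min_le_max _ _ _ _
    _ = c / a - c / b := by
      rw [sub_self, abs_zero, max_eq_right (abs_nonneg _), abs_of_nonneg (sub_nonneg.mpr hdiv)]
    _ = (a⁻¹ - b⁻¹) * c := by ring

lemma min_one_div_sub_min_one_div_eq_zero {a b c : ℝ} (ha : 0 < a) (hab : a ≤ b) (hbc : b < c) :
    min 1 (c / a) - min 1 (c / b) = 0 := by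
  have hb : 0 < b := ha.trans_le hab
  rw [min_eq_left ((one_le_div ha).mpr (hab.trans hbc.le)), min_eq_left ((one_le_div hb).mpr hbc.le),
    sub_self]

lemma abs_min_one_div_sub_min_one_div_le_indicator {a b c : ℝ} (ha : 0 < a) (hab : a ≤ b)
    (hc : 0 ≤ c) :
    |min 1 (c / a) - min 1 (c / b)| ≤ (a⁻¹ - b⁻¹) * c * (if c ≤ b then 1 else 0) := by
  split_ifs with hcb
  · rw [mul_one]
    exact abs_min_one_div_sub_min_one_div_le ha hab hc
  · rw [mul_zero, min_one_div_sub_min_one_div_eq_zero ha hab (not_le.mp hcb), abs_zero]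

/-- For the interacting tempering acceptance ratio `α(x,y) = 1 ∧ (π(y)^β / π(x)^β)`
with `β ∈ (0,1)`: for any `x, x', y` with positive density values and `π(x) ≤ π(x')`,
`|α(x,y) - α(x',y)| ≤ (π(x)^{-β} - π(x')^{-β}) π(y)^β · 1{π(y) ≤ π(x')}`. -/
theorem acceptance_ratio_regularity {X : Type*} (π : X → ℝ) (β : ℝ)
    (hβ : β ∈ Set.Ioo (0:ℝ) 1) (x x' y : X)
    (hx : 0 < π x) (hx' : 0 < π x') (hy : 0 < π y) (hxx' : π x ≤ π x') :
    |min 1 (π y ^ β / π x ^ β) - min 1 (π y ^ β / π x' ^ β)|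
      ≤ (π x ^ (-β) - π x' ^ (-β)) * π y ^ β *
          (if π y ≤ π x' then (1:ℝ) else 0) := by
  have hpow_le : π y ^ β ≤ π x' ^ β ↔ π y ≤ π x' := Real.rpow_le_rpow_iff hy.le hx'.le hβ.1
  rw [Real.rpow_neg hx.le, Real.rpow_neg hx'.le]
  simp only [← hpow_le]
  exact abs_min_one_div_sub_min_one_div_le_indicator (Real.rpow_pos_of_pos hx β)
    (Real.rpow_le_rpow hx.le hxx' hβ.1.le) (Real.rpow_nonneg hy.le β)
end

section
/- Let π be a positive bounded continuous density, β ∈ (0,1), and for a probability measure θ define the kernel K_θ(x,A) := ∫_A α(x,y) θ(dy) + 1_A(x) ∫ (1 − α(x,y)) θ(dy), where α(x,y) = 1 ∧ (π^β(y)/π^β(x)), and set P_θ := (1−υ)P + υK_θ for υ ∈ (0,1). If f satisfies ‖f π^β‖_∞ < ∞, then for any x, x' with π(x), π(x') > 0: sup_θ |P_θ f(x) − P_θ f(x')| ≤ |Pf(x) − Pf(x')| + |f(x) − f(x')| + 2 ‖f π^β‖_∞ |π^{−β}(x) − π^{−β}(x')|. -/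
open MeasureTheory ProbabilityTheory
open scoped ProbabilityTheory

/-! With `w = π^β` and `Δ = |w(x)⁻¹ - w(x')⁻¹|`, the acceptance probabilities `min 1 (w y / w x)`
and `min 1 (w y / w x')` differ by at most `min (w y) (w x') · Δ`. The factor `w y` cancels
against `|f y| ≤ M / w y` in the accepted part and the factor `w x'` against `|f x'| ≤ M / w x'`
in the rejection mass, each giving `M Δ`; the rest is the triangle inequality. -/

lemma min_one_div_mem_Icc {t u : ℝ} (ht : 0 ≤ t) (hu : 0 < u) :
    min 1 (t / u) ∈ Set.Icc 0 1 :=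
  ⟨le_min zero_le_one (div_nonneg ht hu.le), min_le_left _ _⟩

lemma abs_min_one_sub_min_one_le (a b : ℝ) : |min 1 a - min 1 b| ≤ |a - b| := by
  simpa using abs_min_sub_min_le_max 1 a 1 b

lemma abs_min_one_div_sub_le_mul {t : ℝ} (ht : 0 ≤ t) (u v : ℝ) :
    |min 1 (t / u) - min 1 (t / v)| ≤ t * |u⁻¹ - v⁻¹| :=
  calc |min 1 (t / u) - min 1 (t / v)| ≤ |t / u - t / v| := abs_min_one_sub_min_one_le _ _
    _ = t * |u⁻¹ - v⁻¹| := by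
      rw [div_eq_mul_inv, div_eq_mul_inv, ← mul_sub, abs_mul, abs_of_nonneg ht]

lemma abs_min_one_div_sub_le_of_le {t u v : ℝ} (ht : 0 ≤ t) (hu : 0 < u) (huv : u ≤ v) :
    |min 1 (t / u) - min 1 (t / v)| ≤ u * |u⁻¹ - v⁻¹| := by
  have hv : 0 < v := hu.trans_le huv
  have hmono : min 1 (t / v) ≤ min 1 (t / u) :=
    min_le_min_left 1 (div_le_div_of_nonneg_left ht hu huv)
  have hscale : min 1 (t / u) * (u / v) ≤ min 1 (t / v) := by
    rw [min_mul_of_nonneg _ _ (div_nonneg hu.le hv.le), one_mul,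
      show t / u * (u / v) = t / v by field_simp]
    exact min_le_min_right _ ((div_le_one hv).2 huv)
  have hΔ : u * |u⁻¹ - v⁻¹| = 1 - u / v := by
    rw [abs_of_nonneg (sub_nonneg.2 (inv_anti₀ hu huv)), mul_sub, mul_inv_cancel₀ hu.ne',
      div_eq_mul_inv]
  rw [abs_of_nonneg (sub_nonneg.2 hmono), hΔ]
  -- with `m = min 1 (t / u)`: `m - min 1 (t / v) ≤ m * (1 - u / v) ≤ 1 - u / v`
  nlinarith [min_le_left 1 (t / u), div_le_one_of_le₀ huv hv.le]

lemma abs_min_one_div_sub_le_right {t u v : ℝ} (ht : 0 ≤ t) (hu : 0 < u) (hv : 0 < v) :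
    |min 1 (t / u) - min 1 (t / v)| ≤ v * |u⁻¹ - v⁻¹| := by
  rcases le_total u v with huv | hvu
  · exact (abs_min_one_div_sub_le_of_le ht hu huv).trans
      (mul_le_mul_of_nonneg_right huv (abs_nonneg _))
  · rw [abs_sub_comm, abs_sub_comm u⁻¹]
    exact abs_min_one_div_sub_le_of_le ht hv hvu

lemma abs_min_one_div_mul_le {t u : ℝ} (ht : 0 ≤ t) (hu : 0 < u) (s : ℝ) :
    |min 1 (t / u) * s| ≤ |s * t| / u := by
  rw [abs_mul, abs_of_nonneg (min_one_div_mem_Icc ht hu).1, abs_mul,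
    abs_of_nonneg ht, mul_comm |s|, mul_div_right_comm]
  exact mul_le_mul_of_nonneg_right (min_le_right _ _) (abs_nonneg _)

lemma abs_add_mul_sub_add_mul_le {A A' a a' R R' : ℝ} (hR₀ : 0 ≤ R) (hR₁ : R ≤ 1) :
    |(A + a * R) - (A' + a' * R')| ≤ |A - A'| + |a - a'| + |a'| * |R - R'| :=
  calc |(A + a * R) - (A' + a' * R')| = |(A - A') + (a - a') * R + a' * (R - R')| := by ring_nf
    _ ≤ |A - A'| + |(a - a') * R| + |a' * (R - R')| := abs_add_three _ _ _
    _ ≤ |A - A'| + |a - a'| + |a'| * |R - R'| := by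
      rw [abs_mul, abs_mul, abs_of_nonneg hR₀]
      gcongr
      exact mul_le_of_le_one_right (abs_nonneg _) hR₁

lemma abs_convex_comb_sub_le {υ : ℝ} (h₀ : 0 ≤ υ) (h₁ : υ ≤ 1) (p p' q q' : ℝ) :
    |((1 - υ) * p + υ * q) - ((1 - υ) * p' + υ * q')| ≤ |p - p'| + |q - q'| :=
  calc |((1 - υ) * p + υ * q) - ((1 - υ) * p' + υ * q')|
      = |(1 - υ) * (p - p') + υ * (q - q')| := by ring_nf
    _ ≤ (1 - υ) * |p - p'| + υ * |q - q'| := by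
      refine (abs_add_le _ _).trans_eq ?_
      rw [abs_mul, abs_mul, abs_of_nonneg (sub_nonneg.2 h₁), abs_of_nonneg h₀]
    _ ≤ |p - p'| + |q - q'| := by nlinarith [abs_nonneg (p - p'), abs_nonneg (q - q')]

lemma abs_integral_sub_integral_le {X : Type*} [MeasurableSpace X] {μ : Measure X}
    [IsProbabilityMeasure μ] {F G : X → ℝ} (hF : Integrable F μ) (hG : Integrable G μ)
    {c : ℝ} (h : ∀ y, |F y - G y| ≤ c) : |∫ y, F y ∂μ - ∫ y, G y ∂μ| ≤ c := by
  rw [← integral_sub hF hG]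
  simpa using norm_integral_le_of_norm_le_const (μ := μ)
    (ae_of_all _ fun y => (Real.norm_eq_abs _).trans_le (h y))

section RejectionKernel

variable {X : Type*} [MeasurableSpace X] {w f : X → ℝ} {M : ℝ}

lemma integrable_min_one_div_mul (hw : Measurable w) (hwpos : ∀ z, 0 < w z) (hf : Measurable f)
    (hM : ∀ z, |f z * w z| ≤ M) (θ : Measure X) [IsFiniteMeasure θ] {u : ℝ} (hu : 0 < u) :
    Integrable (fun y => min 1 (w y / u) * f y) θ := by
  refine (integrable_const (M / u)).mono'
    ((measurable_const.min (hw.div_const u)).mul hf).aestronglyMeasurable (ae_of_all _ fun y => ?_)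
  rw [Real.norm_eq_abs]
  exact (abs_min_one_div_mul_le (hwpos y).le hu _).trans (div_le_div_of_nonneg_right (hM y) hu.le)

lemma integrable_one_sub_min_one_div (hw : Measurable w) (hwpos : ∀ z, 0 < w z)
    (θ : Measure X) [IsFiniteMeasure θ] {u : ℝ} (hu : 0 < u) :
    Integrable (fun y => 1 - min 1 (w y / u)) θ := by
  refine (integrable_const 1).mono' (measurable_const.sub
    (measurable_const.min (hw.div_const u))).aestronglyMeasurable (ae_of_all _ fun y => ?_)
  obtain ⟨h₀, h₁⟩ := min_one_div_mem_Icc (hwpos y).le hu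
  rw [Real.norm_eq_abs, abs_le]
  constructor <;> linarith

lemma abs_acceptReject_sub_le (hw : Measurable w) (hwpos : ∀ z, 0 < w z) (hf : Measurable f)
    (hM : ∀ z, |f z * w z| ≤ M) (θ : Measure X) [IsProbabilityMeasure θ] (x x' : X) :
    |(∫ y, min 1 (w y / w x) * f y ∂θ + f x * ∫ y, (1 - min 1 (w y / w x)) ∂θ)
      - (∫ y, min 1 (w y / w x') * f y ∂θ + f x' * ∫ y, (1 - min 1 (w y / w x')) ∂θ)|
      ≤ |f x - f x'| + 2 * M * |(w x)⁻¹ - (w x')⁻¹| := by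
  set Δ := |(w x)⁻¹ - (w x')⁻¹|
  have haccept :
      |∫ y, min 1 (w y / w x) * f y ∂θ - ∫ y, min 1 (w y / w x') * f y ∂θ| ≤ M * Δ := by
    refine abs_integral_sub_integral_le (integrable_min_one_div_mul hw hwpos hf hM θ (hwpos x))
      (integrable_min_one_div_mul hw hwpos hf hM θ (hwpos x')) fun y => ?_
    calc |min 1 (w y / w x) * f y - min 1 (w y / w x') * f y|
        = |min 1 (w y / w x) - min 1 (w y / w x')| * |f y| := by rw [← sub_mul, abs_mul]
      _ ≤ w y * Δ * |f y| := by gcongr; exact abs_min_one_div_sub_le_mul (hwpos y).le _ _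
      _ = |f y * w y| * Δ := by rw [abs_mul, abs_of_pos (hwpos y)]; ring
      _ ≤ M * Δ := by gcongr; exact hM y
  have hreject :
      |∫ y, (1 - min 1 (w y / w x)) ∂θ - ∫ y, (1 - min 1 (w y / w x')) ∂θ| ≤ w x' * Δ := by
    refine abs_integral_sub_integral_le (integrable_one_sub_min_one_div hw hwpos θ (hwpos _))
      (integrable_one_sub_min_one_div hw hwpos θ (hwpos _)) fun y => ?_
    rw [sub_sub_sub_cancel_left, abs_sub_comm]
    exact abs_min_one_div_sub_le_right (hwpos y).le (hwpos x) (hwpos x')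
  have hmass₀ : 0 ≤ ∫ y, (1 - min 1 (w y / w x)) ∂θ :=
    integral_nonneg fun y => sub_nonneg.2 (min_le_left _ _)
  have hmass₁ : ∫ y, (1 - min 1 (w y / w x)) ∂θ ≤ 1 :=
    (integral_mono (integrable_one_sub_min_one_div hw hwpos θ (hwpos x)) (integrable_const 1)
      fun y => sub_le_self _ (min_one_div_mem_Icc (hwpos y).le (hwpos x)).1).trans_eq (by simp)
  calc _ ≤ M * Δ + |f x - f x'| + |f x'| * (w x' * Δ) :=
        (abs_add_mul_sub_add_mul_le hmass₀ hmass₁).trans (by gcongr)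
    _ ≤ M * Δ + |f x - f x'| + M * Δ := by
        rw [← mul_assoc, ← abs_of_pos (hwpos x'), ← abs_mul]
        gcongr; exact hM x'
    _ = |f x - f x'| + 2 * M * Δ := by ring

end RejectionKernel

theorem interacting_kernel_equicontinuity_general {X : Type*} [MeasurableSpace X]
    (P : Kernel X X)
    (π : X → ℝ) (hπmeas : Measurable π) (hπpos : ∀ z, 0 < π z)
    (β : ℝ) (υ : ℝ) (hυ : υ ∈ Set.Ioo (0:ℝ) 1)
    (f : X → ℝ) (hfmeas : Measurable f)
    (M : ℝ) (hM : ∀ z, |f z * π z ^ β| ≤ M)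
    (θ : Measure X) [IsProbabilityMeasure θ] (x x' : X) :
    |((1 - υ) * ∫ y, f y ∂(P x)
        + υ * ((∫ y, min 1 (π y ^ β / π x ^ β) * f y ∂θ)
            + f x * ∫ y, (1 - min 1 (π y ^ β / π x ^ β)) ∂θ))
      - ((1 - υ) * ∫ y, f y ∂(P x')
        + υ * ((∫ y, min 1 (π y ^ β / π x' ^ β) * f y ∂θ)
            + f x' * ∫ y, (1 - min 1 (π y ^ β / π x' ^ β)) ∂θ))|
      ≤ |(∫ y, f y ∂(P x)) - ∫ y, f y ∂(P x')| + |f x - f x'|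
        + 2 * M * |π x ^ (-β) - π x' ^ (-β)| := by
  rw [Real.rpow_neg (hπpos x).le, Real.rpow_neg (hπpos x').le, add_assoc]
  refine (abs_convex_comb_sub_le hυ.1.le hυ.2.le _ _ _ _).trans (add_le_add_right ?_ _)
  exact abs_acceptReject_sub_le (hπmeas.pow_const β)
    (fun z => Real.rpow_pos_of_pos (hπpos z) β) hfmeas hM θ x x'

/-- Equicontinuity-type bound for the interacting tempering kernels
`P_θ = (1-υ) P + υ K_θ` where
`K_θ f(x) = ∫ α(x,y) f(y) θ(dy) + f(x) ∫ (1-α(x,y)) θ(dy)` and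
`α(x,y) = 1 ∧ (π(y)^β / π(x)^β)`: if `‖f π^β‖_∞ ≤ M`, then for all `x, x'` with
`π(x), π(x') > 0` and every probability measure `θ`,
`|P_θ f(x) - P_θ f(x')| ≤ |Pf(x) - Pf(x')| + |f(x) - f(x')| + 2M |π(x)^{-β} - π(x')^{-β}|`. -/
theorem interacting_kernel_equicontinuity {X : Type*} [MeasurableSpace X]
    (P : Kernel X X) [IsMarkovKernel P]
    (π : X → ℝ) (hπmeas : Measurable π) (hπpos : ∀ z, 0 < π z)
    (hπbdd : ∃ c, ∀ z, π z ≤ c)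
    (β : ℝ) (hβ : β ∈ Set.Ioo (0:ℝ) 1) (υ : ℝ) (hυ : υ ∈ Set.Ioo (0:ℝ) 1)
    (f : X → ℝ) (hfmeas : Measurable f)
    (hfint : ∀ z, Integrable f (P z))
    (M : ℝ) (hM : ∀ z, |f z * π z ^ β| ≤ M)
    (θ : Measure X) [IsProbabilityMeasure θ] (x x' : X) :
    |((1 - υ) * ∫ y, f y ∂(P x)
        + υ * ((∫ y, min 1 (π y ^ β / π x ^ β) * f y ∂θ)
            + f x * ∫ y, (1 - min 1 (π y ^ β / π x ^ β)) ∂θ))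
      - ((1 - υ) * ∫ y, f y ∂(P x')
        + υ * ((∫ y, min 1 (π y ^ β / π x' ^ β) * f y ∂θ)
            + f x' * ∫ y, (1 - min 1 (π y ^ β / π x' ^ β)) ∂θ))|
      ≤ |(∫ y, f y ∂(P x)) - ∫ y, f y ∂(P x')| + |f x - f x'|
        + 2 * M * |π x ^ (-β) - π x' ^ (-β)| :=
  interacting_kernel_equicontinuity_general P π hπmeas hπpos β υ hυ f hfmeas M hM θ x x'
end

section
/- Let (U,d) be a metric space, (Ω,𝒜,ℙ) a probability space, μ a Borel probability measure on U, and {K_n} random probability measures (Markov kernels from Ω to U). If for each bounded continuous f : U → ℝ the set Ω_f := {ω : lim_n K_n(ω, f) = μ(f)} has ℙ-probability 1, and U is separable, then the set {ω : ∀ bounded continuous f, lim_n K_n(ω,f) = μ(f)} has ℙ-probability 1. -/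
open MeasureTheory ProbabilityTheory Filter Set Metric Topology
open scoped ENNReal NNReal BoundedContinuousFunction

/-!
By the portmanteau theorem it suffices that `μ G ≤ liminf K_n(ω, G)` for every open `G`. Fix a
dense sequence `x`. Every open `G` is the union of the balls `B(x_m, 1/(k+1))` whose
`1/(k+1)`-thickening stays inside `G`, so by continuity from below `μ G` is approximated by the
measure of a finite union `E` of such balls, and the thickened indicator of `E` lies between
`1_E` and `1_G`. These thickened indicators form a countable family, so almost surely
`K_n(ω, f) → μ(f)` holds simultaneously for all of them, which is all the argument needs.
-/

lemma exists_finset_subset_lt_measure_biUnion {α ι : Type*} [MeasurableSpace α]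
    (μ : Measure α) (B : ι → Set α) {I : Set ι} (hI : I.Countable) {r : ℝ≥0∞}
    (hr : r < μ (⋃ i ∈ I, B i)) :
    ∃ T : Finset ι, ↑T ⊆ I ∧ r < μ (⋃ i ∈ T, B i) := by
  have := hI.to_subtype
  have hmono : Monotone fun T : Finset I => ⋃ i ∈ T, B i :=
    fun _ _ hST => biUnion_subset_biUnion_left hST
  rw [biUnion_eq_iUnion, iUnion_eq_iUnion_finset, hmono.measure_iUnion, lt_iSup_iff] at hr
  obtain ⟨T, hT⟩ := hr
  refine ⟨T.map (Function.Embedding.subtype _), by simp, ?_⟩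
  simpa using hT

section DenseBalls

variable {U : Type*} [PseudoMetricSpace U]

def denseBall (x : ℕ → U) (i : ℕ × ℕ) : Set U := ball (x i.1) (1 / (i.2 + 1))

lemma exists_mem_denseBall_thickening_subset {x : ℕ → U} (hx : DenseRange x) {G : Set U}
    (hG : IsOpen G) {u : U} (hu : u ∈ G) :
    ∃ i : ℕ × ℕ, u ∈ denseBall x i ∧ thickening (1 / (i.2 + 1)) (denseBall x i) ⊆ G := by
  obtain ⟨ε, hε, hball⟩ := Metric.isOpen_iff.mp hG u hu
  obtain ⟨k, hk⟩ := exists_nat_one_div_lt (div_pos hε three_pos)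
  set r : ℝ := 1 / (k + 1)
  obtain ⟨m, hm⟩ := Metric.denseRange_iff.mp hx u r Nat.one_div_pos_of_nat
  refine ⟨(m, k), hm, ?_⟩
  calc thickening r (ball (x m) r) ⊆ ball (x m) (r + r) := thickening_ball _ _ _
    _ ⊆ ball u ε := ball_subset_ball' (by rw [dist_comm]; linarith)
    _ ⊆ G := hball

lemma exists_lt_measure_denseBalls_thickening_subset [MeasurableSpace U] (μ : Measure U)
    {x : ℕ → U} (hx : DenseRange x) {G : Set U} (hG : IsOpen G) {r : ℝ≥0∞} (hr : r < μ G) :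
    ∃ (T : Finset (ℕ × ℕ)) (k : ℕ), r < μ (⋃ i ∈ T, denseBall x i) ∧
      thickening (1 / (k + 1)) (⋃ i ∈ T, denseBall x i) ⊆ G := by
  set I := {i : ℕ × ℕ | thickening (1 / (i.2 + 1)) (denseBall x i) ⊆ G}
  have hGI : G = ⋃ i ∈ I, denseBall x i := by
    refine Subset.antisymm (fun u hu => ?_)
      (iUnion₂_subset fun i hi => (self_subset_thickening Nat.one_div_pos_of_nat _).trans hi)
    obtain ⟨i, hui, hiG⟩ := exists_mem_denseBall_thickening_subset hx hG hu
    exact mem_biUnion hiG hui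
  rw [hGI] at hr
  obtain ⟨T, hTI, hrT⟩ := exists_finset_subset_lt_measure_biUnion μ _ I.to_countable hr
  refine ⟨T, T.sup Prod.snd, hrT, ?_⟩
  simp only [thickening_iUnion]
  refine iUnion₂_subset fun i hi => (thickening_mono ?_ _).trans (hTI hi)
  gcongr
  exact_mod_cast Finset.le_sup (f := Prod.snd) hi

noncomputable def denseBallsIndicator (x : ℕ → U) (T : Finset (ℕ × ℕ)) (k : ℕ) : U →ᵇ ℝ≥0 :=
  thickenedIndicator (Nat.one_div_pos_of_nat : 0 < 1 / ((k : ℝ) + 1)) (⋃ i ∈ T, denseBall x i)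

lemma abs_denseBallsIndicator_le_one (x : ℕ → U) (T : Finset (ℕ × ℕ)) (k : ℕ) (u : U) :
    |(denseBallsIndicator x T k u : ℝ)| ≤ 1 := by
  rw [NNReal.abs_eq]
  exact NNReal.coe_le_one.mpr (thickenedIndicator_le_one _ _ u)

end DenseBalls

section Portmanteau

variable {U : Type*} [PseudoMetricSpace U] [MeasurableSpace U] [OpensMeasurableSpace U]

lemma measure_le_liminf_of_tendsto_integral_thickenedIndicator {ι : Type*} {L : Filter ι}
    [L.NeBot] {μ : Measure U} {ν : ι → Measure U} [IsFiniteMeasure μ]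
    [∀ i, IsFiniteMeasure (ν i)] {δ : ℝ} (hδ : 0 < δ) {E G : Set U} (hE : MeasurableSet E)
    (hG : MeasurableSet G) (hEG : thickening δ E ⊆ G)
    (h : Tendsto (fun i => ∫ u, (thickenedIndicator hδ E u : ℝ) ∂ν i) L
      (𝓝 (∫ u, (thickenedIndicator hδ E u : ℝ) ∂μ))) :
    μ E ≤ L.liminf (fun i => ν i G) := by
  set f := thickenedIndicator hδ E
  have lintegral_eq (ρ : Measure U) [IsFiniteMeasure ρ] :
      ∫⁻ u, f u ∂ρ = ENNReal.ofReal (∫ u, (f u : ℝ) ∂ρ) := by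
    rw [← f.toReal_lintegral_coe_eq_integral,
      ENNReal.ofReal_toReal (f.lintegral_lt_top_of_nnreal ρ).ne]
  have f_le_indicator (u : U) : (f u : ℝ≥0∞) ≤ G.indicator 1 u := by
    by_cases hu : u ∈ G
    · rw [indicator_of_mem hu, Pi.one_apply]
      exact_mod_cast thickenedIndicator_le_one hδ E u
    · simp [hu, f, thickenedIndicator_zero hδ E (fun h => hu (hEG h))]
  calc μ E ≤ ∫⁻ u, f u ∂μ := measure_le_lintegral_thickenedIndicator μ hE hδ
    _ = L.liminf (fun i => ∫⁻ u, f u ∂ν i) := by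
      simp_rw [lintegral_eq]
      exact (((ENNReal.continuous_ofReal.tendsto _).comp h).liminf_eq).symm
    _ ≤ L.liminf (fun i => ν i G) := liminf_le_liminf <| Eventually.of_forall fun i =>
      (lintegral_mono f_le_indicator).trans_eq (lintegral_indicator_one hG)

theorem ProbabilityMeasure.tendsto_of_forall_tendsto_integral_denseBallsIndicator {ι : Type*}
    {L : Filter ι} [L.IsCountablyGenerated] [L.NeBot] {x : ℕ → U} (hx : DenseRange x)
    {μ : ProbabilityMeasure U} {ν : ι → ProbabilityMeasure U}
    (h : ∀ T k, Tendsto (fun i => ∫ u, (denseBallsIndicator x T k u : ℝ) ∂(ν i : Measure U)) L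
      (𝓝 (∫ u, (denseBallsIndicator x T k u : ℝ) ∂(μ : Measure U)))) :
    Tendsto ν L (𝓝 μ) := by
  refine tendsto_of_forall_isOpen_le_liminf' fun G hG => le_of_forall_lt fun r hr => ?_
  obtain ⟨T, k, hrT, hTG⟩ := exists_lt_measure_denseBalls_thickening_subset (μ : Measure U) hx hG hr
  refine hrT.trans_le (measure_le_liminf_of_tendsto_integral_thickenedIndicator _ ?_
    hG.measurableSet hTG (h T k))
  exact Finset.measurableSet_biUnion _ fun _ _ => measurableSet_ball

end Portmanteau

theorem random_varadarajan_general
    {U : Type*} [MetricSpace U] [TopologicalSpace.SeparableSpace U]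
    [MeasurableSpace U] [BorelSpace U]
    {Ω : Type*} [MeasurableSpace Ω] (Pm : Measure Ω)
    (μ : Measure U) [IsProbabilityMeasure μ]
    (K : ℕ → Kernel Ω U) (hK : ∀ n, IsMarkovKernel (K n))
    (h : ∀ f : U → ℝ, Continuous f → (∃ C, ∀ u, |f u| ≤ C) →
      ∀ᵐ ω ∂Pm, Tendsto (fun n => ∫ u, f u ∂((K n) ω)) atTop (nhds (∫ u, f u ∂μ))) :
    ∀ᵐ ω ∂Pm, ∀ f : U → ℝ, Continuous f → (∃ C, ∀ u, |f u| ≤ C) →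
      Tendsto (fun n => ∫ u, f u ∂((K n) ω)) atTop (nhds (∫ u, f u ∂μ)) := by
  have := nonempty_of_isProbabilityMeasure μ
  obtain ⟨x, hx⟩ := TopologicalSpace.exists_dense_seq U
  have h_tests : ∀ᵐ ω ∂Pm, ∀ T k, Tendsto (fun n => ∫ u, (denseBallsIndicator x T k u : ℝ) ∂(K n ω))
      atTop (𝓝 (∫ u, (denseBallsIndicator x T k u : ℝ) ∂μ)) := by
    simp only [ae_all_iff]
    exact fun T k => h _ (NNReal.continuous_coe.comp (denseBallsIndicator x T k).continuous)
      ⟨1, abs_denseBallsIndicator_le_one x T k⟩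
  filter_upwards [h_tests] with ω hω f hf ⟨C, hC⟩
  have := fun n => (hK n).isProbabilityMeasure ω
  have h_weak := ProbabilityMeasure.tendsto_of_forall_tendsto_integral_denseBallsIndicator hx
    (μ := ⟨μ, inferInstance⟩) (ν := fun n => ⟨K n ω, inferInstance⟩) hω
  simpa using ProbabilityMeasure.tendsto_iff_forall_integral_tendsto.mp h_weak
    (BoundedContinuousFunction.ofNormedAddCommGroup f hf C fun u =>
      (Real.norm_eq_abs _).trans_le (hC u))

/-- Random-measure extension of Varadarajan's theorem: if `(U,d)` is a separable metric
space, `μ` a Borel probability measure, and `{K_n}` Markov kernels from `Ω` to `U` such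
that for each bounded continuous `f` the set `{ω : K_n(ω,f) → μ(f)}` has full
probability, then almost surely `K_n(ω,·)` converges weakly to `μ`, i.e. the set
`{ω : ∀ bounded continuous f, K_n(ω,f) → μ(f)}` has full probability. -/
theorem random_varadarajan
    {U : Type*} [MetricSpace U] [TopologicalSpace.SeparableSpace U]
    [MeasurableSpace U] [BorelSpace U]
    {Ω : Type*} [MeasurableSpace Ω] (Pm : Measure Ω) [IsProbabilityMeasure Pm]
    (μ : Measure U) [IsProbabilityMeasure μ]
    (K : ℕ → Kernel Ω U) (hK : ∀ n, IsMarkovKernel (K n))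
    (h : ∀ f : U → ℝ, Continuous f → (∃ C, ∀ u, |f u| ≤ C) →
      ∀ᵐ ω ∂Pm, Tendsto (fun n => ∫ u, f u ∂((K n) ω)) atTop (nhds (∫ u, f u ∂μ))) :
    ∀ᵐ ω ∂Pm, ∀ f : U → ℝ, Continuous f → (∃ C, ∀ u, |f u| ≤ C) →
      Tendsto (fun n => ∫ u, f u ∂((K n) ω)) atTop (nhds (∫ u, f u ∂μ)) :=
  random_varadarajan_general Pm μ K hK h
end

section
/- For the AM covariance update Γ_{n} defined by Γ_{n+1} = (n/(n+1)) Γ_n + (1/(n+1))((X_{n+1}−μ_n)(X_{n+1}−μ_n)^T + κ I_d) and μ_{n+1} = μ_n + (X_{n+1}−μ_n)/(n+1), for any m < n the operator-norm (or Frobenius-norm) difference satisfies |Γ_n − Γ_{n−m}| ≤ (2/n)(2κ m d + (m/(n−m)) Σ_{j=0}^{n−m−1} |X_{j+1}−μ_j|^2 + Σ_{j=n−m}^{n−1} |X_{j+1}−μ_j|^2) up to the constant factor in the paper, i.e., D_{W^a}(θ_n, θ_{n−m}) ≤ (2dκ^{-1}/n)(2κ m d + (m/(n−m)) Σ_{j=0}^{n−m−1}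 |X_{j+1}−μ_j|^2 + Σ_{j=n−m}^{n−1} |X_{j+1}−μ_j|^2), given the Lipschitz bound D_{W^a}(θ, θ̃) ≤ 2dκ^{-1}|Γ − Γ̃|. -/
/-!
Unrolling the covariance recursion gives `n • Γ n = ∑ j < n, A j` with
`A j = (X (j+1) - μ j)(X (j+1) - μ j)ᵀ + κ I`, so `Γ` is the running mean of the `A j`.
For `k = n - m`, `Γ n - Γ k = (1/n - 1/k) ∑_{j<k} A j + (1/n) ∑_{k≤j<n} A j` with
`|1/n - 1/k| = m / (n k)`, and the Frobenius bound `‖A j‖ ≤ ‖X (j+1) - μ j‖² + κ d` turns this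
into the estimate, which the Lipschitz bound transfers to `D`.
-/

open Finset Matrix

attribute [local instance] Matrix.frobeniusNormedAddCommGroup Matrix.frobeniusNormedSpace

section Frobenius

variable {n α : Type*} [Fintype n]

theorem frobenius_norm_vecMulVec_le [RCLike α] (v w : EuclideanSpace α n) :
    ‖vecMulVec ⇑v ⇑w‖ ≤ ‖v‖ * ‖w‖ := by
  rw [vecMulVec_eq Unit]
  calc _ ≤ ‖replicateCol Unit ⇑v‖ * ‖replicateRow Unit ⇑w‖ := frobenius_norm_mul _ _
    _ = ‖v‖ * ‖w‖ := by rw [frobenius_norm_replicateCol, frobenius_norm_replicateRow]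

theorem frobenius_norm_one_le_card [DecidableEq n] [NormedAddCommGroup α] [One α]
    [NormOneClass α] : ‖(1 : Matrix n n α)‖ ≤ Fintype.card n := by
  have h := congrArg NNReal.toReal (frobenius_nnnorm_one (n := n) (α := α))
  push_cast at h
  rw [h, norm_one, mul_one, Real.sqrt_le_self_iff]
  rcases (Fintype.card n).eq_zero_or_pos with h0 | hpos
  · simp [h0]
  · exact Or.inr (by exact_mod_cast hpos)

theorem frobenius_norm_vecMulVec_self_add_smul_one_le [DecidableEq n]
    (v : EuclideanSpace ℝ n) {κ : ℝ} (hκ : 0 ≤ κ) :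
    ‖vecMulVec ⇑v ⇑v + κ • (1 : Matrix n n ℝ)‖ ≤ ‖v‖ ^ 2 + κ * Fintype.card n := by
  refine (norm_add_le _ _).trans (add_le_add ?_ ?_)
  · exact (frobenius_norm_vecMulVec_le v v).trans_eq (sq _).symm
  · rw [norm_smul, Real.norm_of_nonneg hκ]
    exact mul_le_mul_of_nonneg_left frobenius_norm_one_le_card hκ

end Frobenius

section RunningMean

variable {E : Type*}

theorem natCast_smul_eq_sum_of_running_mean [AddCommGroup E] [Module ℝ E] {Γ A : ℕ → E}
    (hΓ : ∀ n : ℕ, Γ (n + 1) = ((n : ℝ) / ((n : ℝ) + 1)) • Γ n + ((n : ℝ) + 1)⁻¹ • A n)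
    (n : ℕ) : (n : ℝ) • Γ n = ∑ j ∈ range n, A j := by
  induction n with
  | zero => simp
  | succ n ih =>
    have hn : (n : ℝ) + 1 ≠ 0 := by positivity
    rw [hΓ n, smul_add, smul_smul, smul_smul, sum_range_succ, ← ih]
    push_cast
    rw [mul_div_cancel₀ _ hn, mul_inv_cancel₀ hn, one_smul]

theorem norm_inv_smul_sum_sub_inv_smul_sum_le [SeminormedAddCommGroup E] [NormedSpace ℝ E]
    (A : ℕ → E) {k : ℕ} (hk : 0 < k) (m : ℕ) :
    ‖((k + m : ℕ) : ℝ)⁻¹ • ∑ j ∈ range (k + m), A j - (k : ℝ)⁻¹ • ∑ j ∈ range k, A j‖ ≤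
      m / ((k + m) * k) * ∑ j ∈ range k, ‖A j‖
        + ((k + m : ℕ) : ℝ)⁻¹ * ∑ j ∈ Ico k (k + m), ‖A j‖ := by
  have hsplit : ∑ j ∈ range (k + m), A j = ∑ j ∈ range k, A j + ∑ j ∈ Ico k (k + m), A j :=
    (sum_range_add_sum_Ico A (Nat.le_add_right k m)).symm
  have hcoef : ((k + m : ℕ) : ℝ)⁻¹ - (k : ℝ)⁻¹ = -(m / ((k + m) * k)) := by
    push_cast
    field_simp
    ring
  calc _ = ‖(((k + m : ℕ) : ℝ)⁻¹ - (k : ℝ)⁻¹) • ∑ j ∈ range k, A j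
          + ((k + m : ℕ) : ℝ)⁻¹ • ∑ j ∈ Ico k (k + m), A j‖ := by
        rw [hsplit]; congr 1; module
    _ ≤ m / ((k + m) * k) * ‖∑ j ∈ range k, A j‖
          + ((k + m : ℕ) : ℝ)⁻¹ * ‖∑ j ∈ Ico k (k + m), A j‖ := by
        refine (norm_add_le _ _).trans_eq ?_
        rw [norm_smul, norm_smul, hcoef, norm_neg, Real.norm_of_nonneg (by positivity),
          Real.norm_of_nonneg (by positivity)]
    _ ≤ _ := by gcongr <;> exact norm_sum_le _ _

theorem norm_running_mean_sub_le [SeminormedAddCommGroup E] [NormedSpace ℝ E] {Γ A : ℕ → E}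
    (hΓ : ∀ n : ℕ, Γ (n + 1) = ((n : ℝ) / ((n : ℝ) + 1)) • Γ n + ((n : ℝ) + 1)⁻¹ • A n)
    {a : ℕ → ℝ} {c : ℝ} (hA : ∀ j, ‖A j‖ ≤ a j + c) {n m : ℕ} (hmn : m < n) :
    ‖Γ n - Γ (n - m)‖ ≤ (n : ℝ)⁻¹ * (2 * c * m + ((m : ℝ) / ((n : ℝ) - m)) *
      ∑ j ∈ range (n - m), a j + ∑ j ∈ Ico (n - m) n, a j) := by
  obtain ⟨k, hk, rfl⟩ : ∃ k, 0 < k ∧ n = k + m := ⟨n - m, by omega, by omega⟩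
  have hmean : ∀ N, 0 < N → Γ N = (N : ℝ)⁻¹ • ∑ j ∈ range N, A j := fun N hN => by
    rw [← natCast_smul_eq_sum_of_running_mean hΓ N, inv_smul_smul₀ (by positivity)]
  have hsum_le : ∀ s : Finset ℕ, ∑ j ∈ s, ‖A j‖ ≤ ∑ j ∈ s, a j + #s * c := fun s => by
    rw [← nsmul_eq_mul, ← sum_const, ← sum_add_distrib]
    exact sum_le_sum fun j _ => hA j
  rw [Nat.add_sub_cancel, hmean (k + m) (by omega), hmean k hk]
  calc _ ≤ m / ((k + m) * k) * ∑ j ∈ range k, ‖A j‖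
          + ((k + m : ℕ) : ℝ)⁻¹ * ∑ j ∈ Ico k (k + m), ‖A j‖ :=
        norm_inv_smul_sum_sub_inv_smul_sum_le A hk m
    _ ≤ m / ((k + m) * k) * (∑ j ∈ range k, a j + k * c)
          + ((k + m : ℕ) : ℝ)⁻¹ * (∑ j ∈ Ico k (k + m), a j + m * c) := by
        gcongr
        · simpa using hsum_le (range k)
        · simpa using hsum_le (Ico k (k + m))
    _ = _ := by
        have : (k : ℝ) ≠ 0 := by positivity
        push_cast
        rw [add_sub_cancel_right]
        field_simp
        ring

end RunningMean

theorem am_diminishing_adaptation_general (d : ℕ) (κ : ℝ) (hκ : 0 < κ)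
    (X μv : ℕ → EuclideanSpace ℝ (Fin d))
    (Γ : ℕ → Matrix (Fin d) (Fin d) ℝ)
    (hΓrec : ∀ n : ℕ, Γ (n+1) = ((n:ℝ)/((n:ℝ)+1)) • Γ n +
      (((n:ℝ)+1)⁻¹) • (Matrix.vecMulVec (X (n+1) - μv n) (X (n+1) - μv n) + κ • (1 : Matrix (Fin d) (Fin d) ℝ)))
    (D : ℕ → ℕ → ℝ)
    (hLip : ∀ a b : ℕ, D a b ≤ 2 * d * κ⁻¹ * ‖Γ a - Γ b‖)
    (n m : ℕ) (hmn : m < n) :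
    D n (n - m) ≤ (2 * d * κ⁻¹ / n) *
      (2 * κ * m * d
        + ((m : ℝ) / ((n : ℝ) - m)) * ∑ j ∈ Finset.range (n - m), ‖X (j+1) - μv j‖ ^ 2
        + ∑ j ∈ Finset.Ico (n - m) n, ‖X (j+1) - μv j‖ ^ 2) := by
  have hA : ∀ j, ‖vecMulVec ⇑(X (j + 1) - μv j) ⇑(X (j + 1) - μv j)
      + κ • (1 : Matrix (Fin d) (Fin d) ℝ)‖ ≤ ‖X (j + 1) - μv j‖ ^ 2 + κ * d := fun j => by
    simpa using frobenius_norm_vecMulVec_self_add_smul_one_le (X (j + 1) - μv j) hκ.le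
  calc D n (n - m) ≤ 2 * d * κ⁻¹ * ‖Γ n - Γ (n - m)‖ := hLip n (n - m)
    _ ≤ 2 * d * κ⁻¹ * ((n : ℝ)⁻¹ * (2 * (κ * d) * m
          + ((m : ℝ) / ((n : ℝ) - m)) * ∑ j ∈ range (n - m), ‖X (j+1) - μv j‖ ^ 2
          + ∑ j ∈ Ico (n - m) n, ‖X (j+1) - μv j‖ ^ 2)) := by
        gcongr
        exact norm_running_mean_sub_le hΓrec hA hmn
    _ = _ := by ring

/-- Diminishing adaptation bound for the adaptive Metropolis covariance update:
given the recursions `μ_{n+1} = μ_n + (X_{n+1}-μ_n)/(n+1)` and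
`Γ_{n+1} = (n/(n+1)) Γ_n + (1/(n+1))((X_{n+1}-μ_n)(X_{n+1}-μ_n)ᵀ + κ I_d)`, and the
Lipschitz bound `D_{W^a}(θ,θ̃) ≤ 2dκ⁻¹ ‖Γ - Γ̃‖`, for any `m < n`,
`D_{W^a}(θ_n, θ_{n-m}) ≤ (2dκ⁻¹/n)(2κ m d + (m/(n-m)) Σ_{j<n-m} |X_{j+1}-μ_j|²
+ Σ_{j=n-m}^{n-1} |X_{j+1}-μ_j|²)`. -/
theorem am_diminishing_adaptation (d : ℕ) (hd : 0 < d) (κ : ℝ) (hκ : 0 < κ)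
    (X μv : ℕ → EuclideanSpace ℝ (Fin d))
    (Γ : ℕ → Matrix (Fin d) (Fin d) ℝ)
    (hμ0 : μv 0 = 0) (hΓ0 : Γ 0 |>.PosSemidef)
    (hμrec : ∀ n, μv (n+1) = μv n + ((n:ℝ)+1)⁻¹ • (X (n+1) - μv n))
    (hΓrec : ∀ n : ℕ, Γ (n+1) = ((n:ℝ)/((n:ℝ)+1)) • Γ n +
      (((n:ℝ)+1)⁻¹) • (Matrix.vecMulVec (X (n+1) - μv n) (X (n+1) - μv n) + κ • (1 : Matrix (Fin d) (Fin d) ℝ)))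
    (D : ℕ → ℕ → ℝ)
    (hLip : ∀ a b : ℕ, D a b ≤ 2 * d * κ⁻¹ * ‖Γ a - Γ b‖)
    (n m : ℕ) (hmn : m < n) :
    D n (n - m) ≤ (2 * d * κ⁻¹ / n) *
      (2 * κ * m * d
        + ((m : ℝ) / ((n : ℝ) - m)) * ∑ j ∈ Finset.range (n - m), ‖X (j+1) - μv j‖ ^ 2
        + ∑ j ∈ Finset.Ico (n - m) n, ‖X (j+1) - μv j‖ ^ 2) :=
  am_diminishing_adaptation_general d κ hκ X μv Γ hΓrec D hLip n m hmn
end
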